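/- For every fixed β > 0, the Erlang blocking probability E(β,K) := ((βK)^K / K!) / (∑_{k=0}^{K} (βK)^k / k!) converges, as the integer K → ∞, to max{1 − 1/β, 0}. -/

import Mathlib

/-!
Writing `k = K - j`, the reciprocal of the blocking probability is
`∑_{j ≤ K} K(K-1)⋯(K-j+1) / (βK)^j = ∑_{j ≤ K} (K.descFactorial j / K^j) β^{-j}`.
Each ratio `K.descFactorial j / K^j` lies in `[0, 1]` and tends to `1`, so for `β > 1` Tannery's
theorem (dominated convergence for series, with dominating series `∑ β^{-j}`) gives
the limit `(1 - 1/β)⁻¹`, while for `β ≤ 1` every partial sum eventually exceeds any bound.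
-/

open Filter Finset Topology

lemma tendsto_descFactorial_div_pow (j : ℕ) :
    Tendsto (fun n : ℕ => (n.descFactorial j : ℝ) / n ^ j) atTop (𝓝 1) := by
  have hne : ∀ᶠ n : ℕ in atTop, (n : ℝ) ^ j ≠ 0 := by
    filter_upwards [eventually_ge_atTop 1] with n hn
    exact pow_ne_zero _ (by exact_mod_cast (Nat.one_le_iff_ne_zero.mp hn))
  exact (Asymptotics.isEquivalent_iff_tendsto_one hne).mp (isEquivalent_descFactorial j)

lemma descFactorial_div_pow_le_one (n j : ℕ) : (n.descFactorial j : ℝ) / n ^ j ≤ 1 :=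
  div_le_one_of_le₀ (by exact_mod_cast Nat.descFactorial_le_pow n j) (by positivity)

lemma sum_pow_div_factorial_eq_mul_sum_descFactorial {x : ℝ} (hx : x ≠ 0) (K : ℕ) :
    ∑ k ∈ range (K + 1), x ^ k / k.factorial =
      x ^ K / K.factorial * ∑ j ∈ range (K + 1), (K.descFactorial j : ℝ) / x ^ j := by
  rw [mul_sum, ← sum_range_reflect]
  refine sum_congr rfl fun j hj => ?_
  have hjK : j ≤ K := Nat.lt_succ_iff.mp (mem_range.mp hj)
  have hfac : (K.factorial : ℝ) = (K - j).factorial * K.descFactorial j := by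
    exact_mod_cast (Nat.factorial_mul_descFactorial hjK).symm
  have hpow : x ^ K = x ^ (K - j) * x ^ j := by rw [← pow_add, Nat.sub_add_cancel hjK]
  have hd : (K.descFactorial j : ℝ) ≠ 0 := by
    exact_mod_cast (Nat.descFactorial_eq_zero_iff_lt.not.mpr (by omega))
  rw [hfac, hpow, show K + 1 - 1 - j = K - j by omega]
  field_simp

noncomputable def descFactorialSeries (r : ℝ) (K : ℕ) : ℝ :=
  ∑ j ∈ range (K + 1), (K.descFactorial j : ℝ) / K ^ j * r ^ j

lemma descFactorialSeries_eq_tsum (r : ℝ) (K : ℕ) :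
    descFactorialSeries r K = ∑' j, (K.descFactorial j : ℝ) / K ^ j * r ^ j := by
  refine (tsum_eq_sum fun j hj => ?_).symm
  rw [Nat.descFactorial_eq_zero_iff_lt.mpr (by simpa using hj)]
  simp

lemma tendsto_descFactorialSeries_of_lt_one {r : ℝ} (h0 : 0 ≤ r) (h1 : r < 1) :
    Tendsto (descFactorialSeries r) atTop (𝓝 (1 - r)⁻¹) := by
  have hbound (K j : ℕ) : ‖(K.descFactorial j : ℝ) / K ^ j * r ^ j‖ ≤ r ^ j := by
    rw [Real.norm_of_nonneg (by positivity)]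
    exact mul_le_of_le_one_left (by positivity) (descFactorial_div_pow_le_one K j)
  have h := tendsto_tsum_of_dominated_convergence (summable_geometric_of_lt_one h0 h1)
    (fun j => by simpa using (tendsto_descFactorial_div_pow j).mul_const (r ^ j))
    (Eventually.of_forall hbound)
  rw [tsum_geometric_of_lt_one h0 h1] at h
  exact h.congr fun K => (descFactorialSeries_eq_tsum r K).symm

lemma sum_range_le_descFactorialSeries {r : ℝ} (hr : 0 ≤ r) {m K : ℕ} (hmK : m ≤ K) :
    ∑ j ∈ range (m + 1), (K.descFactorial j : ℝ) / K ^ j * r ^ j ≤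
      descFactorialSeries r K :=
  sum_le_sum_of_subset_of_nonneg (range_subset_range.mpr (by omega))
    fun _ _ _ => by positivity

lemma tendsto_descFactorialSeries_of_one_le {r : ℝ} (hr : 1 ≤ r) :
    Tendsto (descFactorialSeries r) atTop atTop := by
  refine tendsto_atTop.mpr fun b => ?_
  obtain ⟨m, hm⟩ := exists_nat_ge b
  have hpartial : Tendsto
      (fun K : ℕ => ∑ j ∈ range (m + 1), (K.descFactorial j : ℝ) / K ^ j * r ^ j) atTop
      (𝓝 (∑ j ∈ range (m + 1), r ^ j)) :=
    tendsto_finsetSum _ fun j _ => by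
      simpa using (tendsto_descFactorial_div_pow j).mul_const (r ^ j)
  have hlt : b < ∑ j ∈ range (m + 1), r ^ j :=
    calc b < m + 1 := by linarith
      _ = ∑ _j ∈ range (m + 1), (1 : ℝ) := by simp
      _ ≤ ∑ j ∈ range (m + 1), r ^ j := sum_le_sum fun j _ => one_le_pow₀ hr
  filter_upwards [hpartial.eventually (eventually_gt_nhds hlt), eventually_ge_atTop m]
    with K hb hmK
  exact hb.le.trans (sum_range_le_descFactorialSeries (by linarith) hmK)

lemma erlang_eq_inv_descFactorialSeries {β : ℝ} (hβ : 0 < β) (K : ℕ) :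
    ((β * K) ^ K / (Nat.factorial K : ℝ)) /
        (∑ k ∈ Finset.range (K + 1), (β * K) ^ k / (Nat.factorial k : ℝ)) =
      (descFactorialSeries (1 / β) K)⁻¹ := by
  rcases K.eq_zero_or_pos with rfl | hK
  · simp [descFactorialSeries]
  have hβK : 0 < β * K := by positivity
  rw [sum_pow_div_factorial_eq_mul_sum_descFactorial hβK.ne',
    div_mul_cancel_left₀ (by positivity)]
  congr 1
  refine sum_congr rfl fun j _ => ?_
  rw [mul_pow, div_pow, one_pow]
  field_simp

theorem erlang_blocking_limit (β : ℝ) (hβ : 0 < β) :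
    Tendsto (fun K : ℕ =>
        ((β * K) ^ K / (Nat.factorial K : ℝ)) /
          (∑ k ∈ Finset.range (K + 1), (β * K) ^ k / (Nat.factorial k : ℝ)))
      atTop (nhds (max (1 - 1 / β) 0)) := by
  simp_rw [erlang_eq_inv_descFactorialSeries hβ]
  rcases le_or_gt β 1 with hβ1 | hβ1
  · rw [max_eq_right (by linarith [one_le_one_div hβ hβ1])]
    exact (tendsto_descFactorialSeries_of_one_le (one_le_one_div hβ hβ1)).inv_tendsto_atTop
  · have hr1 : 1 / β < 1 := (div_lt_one hβ).mpr hβ1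
    rw [max_eq_left (by linarith)]
    simpa using (tendsto_descFactorialSeries_of_lt_one (by positivity) hr1).inv₀
      (inv_ne_zero (by linarith))
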